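/- For every n ≥ 1: ‖p_n‖₂ ≤ ‖s_n‖₂ ≤ C‖p_{n−1}‖₂, and (1 + χ·C^{−2})·‖p_n‖₂² ≤ ‖s_n‖_S² ≤ (C² + χ)·‖p_{n−1}‖₂². -/

import Mathlib

/-!
`p_n` is the `L²`-shortest and `s_n` the Sobolev-shortest element of `P_n + W_{n-1}`.
Since `Δ` lowers degrees by exactly one, `Δ s_n ∈ P_{n-1} + W_{n-2}`, giving `‖p_{n-1}‖ ≤ ‖Δ s_n‖`,
and `𝒢 p_{n-1} ∈ P_n + W_{n-1}`, giving `‖s_n‖_S² ≤ ‖𝒢 p_{n-1}‖² + χ ‖p_{n-1}‖²`; together these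
are the upper bounds. For the lower bound, `s_n` is orthogonal to `ker Δ = ℝ P_0`, which contains
`s_n - 𝒢 Δ s_n`, so `‖s_n‖² = ⟨𝒢 s_n, Δ s_n⟩ ≤ C ‖s_n‖ ‖Δ s_n‖`.
-/

open Filter RealInnerProductSpace

variable {H : Type*} [NormedAddCommGroup H] [InnerProductSpace ℝ H]

/-- `Wlt P n` is the span of `P 0, …, P (n-1)`; thus `Wlt P 0 = ⊥ = W_{-1}` and
`Wlt P (n+1)` is the space `W_n = span{P_0, …, P_n}`. -/
def Wlt (P : ℕ → H) (n : ℕ) : Submodule ℝ H := Submodule.span ℝ (P '' Set.Iio n)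

/-- `Wtot P` is the space `W = ⋃ₙ Wₙ` of all polynomials. -/
def Wtot (P : ℕ → H) : Submodule ℝ H := Submodule.span ℝ (Set.range P)

/-- The Sobolev inner product `⟨f, g⟩_S = ⟨f, g⟩₂ + χ⟨Δf, Δg⟩₂`. -/
noncomputable def innerS (Δ : H →ₗ[ℝ] H) (χ : ℝ) (f g : H) : ℝ :=
  ⟪ f, g ⟫ + χ * ⟪ Δ f, Δ g ⟫

/-- The Sobolev norm `‖f‖_S = √(‖f‖₂² + χ‖Δf‖₂²)`. -/
noncomputable def normS (Δ : H →ₗ[ℝ] H) (χ : ℝ) (f : H) : ℝ :=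
  Real.sqrt (‖f‖ ^ 2 + χ * ‖Δ f‖ ^ 2)

section Wlt

variable {P : ℕ → H}

lemma Wlt_mono {m n : ℕ} (h : m ≤ n) : Wlt P m ≤ Wlt P n :=
  Submodule.span_mono (Set.image_mono fun _ hx => lt_of_lt_of_le hx h)

lemma Wlt_le_Wtot (n : ℕ) : Wlt P n ≤ Wtot P :=
  Submodule.span_mono (Set.image_subset_range _ _)

lemma P_mem_Wlt {i n : ℕ} (h : i < n) : P i ∈ Wlt P n :=
  Submodule.subset_span ⟨i, h, rfl⟩

lemma P_notMem_Wlt (hP : LinearIndependent ℝ P) (n : ℕ) : P n ∉ Wlt P n :=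
  hP.notMem_span_image (by simp)

lemma Wlt_zero : Wlt P 0 = ⊥ := by
  simp [Wlt]

lemma Wlt_one : Wlt P 1 = ℝ ∙ P 0 := by
  simp [Wlt]

lemma Wlt_succ (n : ℕ) : Wlt P (n + 1) = (ℝ ∙ P n) ⊔ Wlt P n := by
  have : Set.Iio (n + 1) = insert n (Set.Iio n) := by
    ext i; simp only [Set.mem_Iio, Set.mem_insert_iff]; omega
  rw [Wlt, this, Set.image_insert_eq, Submodule.span_insert, Wlt]

lemma mem_Wlt_succ_of_sub_mem {x : H} {n : ℕ} (hx : x - P n ∈ Wlt P n) :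
    x ∈ Wlt P (n + 1) := by
  simpa using add_mem (Wlt_mono n.le_succ hx) (P_mem_Wlt n.lt_succ_self)

end Wlt

section Laplacian

variable {P : ℕ → H} {Δ : H →ₗ[ℝ] H}

lemma apply_mem_Wlt (hΔ0 : Δ (P 0) = 0) (hΔsucc : ∀ n, Δ (P (n + 1)) = P n) {n : ℕ} {w : H}
    (hw : w ∈ Wlt P (n + 1)) : Δ w ∈ Wlt P n := by
  refine (Submodule.span_le (p := (Wlt P n).comap Δ)).2 ?_ hw
  rintro _ ⟨i | i, hi, rfl⟩
  · simp [hΔ0]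
  · simpa [hΔsucc] using P_mem_Wlt (Nat.succ_lt_succ_iff.mp hi)

lemma apply_sub_P_mem_Wlt (hΔ0 : Δ (P 0) = 0) (hΔsucc : ∀ n, Δ (P (n + 1)) = P n) {n : ℕ}
    {x : H} (hx : x - P (n + 1) ∈ Wlt P (n + 1)) : Δ x - P n ∈ Wlt P n := by
  simpa [hΔsucc] using apply_mem_Wlt hΔ0 hΔsucc hx

/- If `w` has a nonzero coefficient on some `P k` with `k > n`, then `Δ w` has one on `P (k - 1)`,
by linear independence. -/
lemma mem_Wlt_succ_of_apply_mem (hP : LinearIndependent ℝ P) (hΔ0 : Δ (P 0) = 0)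
    (hΔsucc : ∀ n, Δ (P (n + 1)) = P n) {n N : ℕ} {w : H} (hw : w ∈ Wlt P N)
    (hΔw : Δ w ∈ Wlt P n) : w ∈ Wlt P (n + 1) := by
  induction N generalizing w with
  | zero => exact Wlt_mono (Nat.zero_le _) hw
  | succ k ih =>
    rcases le_or_gt k n with hk | hk
    · exact Wlt_mono (by omega) hw
    obtain ⟨j, rfl⟩ : ∃ j, k = j + 1 := ⟨k - 1, by omega⟩
    rw [Wlt_succ] at hw
    obtain ⟨_, hz, w', hw', rfl⟩ := Submodule.mem_sup.mp hw
    obtain ⟨a, rfl⟩ := Submodule.mem_span_singleton.mp hz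
    have haP : a • P j ∈ Wlt P j := by
      have : a • P j = Δ (a • P (j + 1) + w') - Δ w' := by simp [hΔsucc]
      rw [this]
      exact sub_mem (Wlt_mono (by omega) hΔw) (apply_mem_Wlt hΔ0 hΔsucc hw')
    obtain rfl : a = 0 := by
      by_contra ha
      exact P_notMem_Wlt hP j ((Submodule.smul_mem_iff _ ha).mp haP)
    rw [zero_smul, zero_add] at hΔw ⊢
    exact ih hw' hΔw

end Laplacian

lemma norm_le_of_sub_mem_of_inner_eq_zero {S : Submodule ℝ H} {q x : H}
    (horth : ∀ w ∈ S, ⟪q, w⟫ = 0) (hx : x - q ∈ S) : ‖q‖ ≤ ‖x‖ := by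
  have h := norm_add_sq_eq_norm_sq_add_norm_sq_real (horth _ hx)
  rw [add_sub_cancel] at h
  exact (pow_le_pow_iff_left₀ (norm_nonneg _) (norm_nonneg _) two_ne_zero).mp
    (by nlinarith [sq_nonneg ‖x - q‖])

lemma sobolev_sq_le_of_sub_mem_of_innerS_eq_zero {Δ : H →ₗ[ℝ] H} {χ : ℝ} (hχ : 0 ≤ χ)
    {S : Submodule ℝ H} {q x : H} (horth : ∀ w ∈ S, innerS Δ χ q w = 0) (hx : x - q ∈ S) :
    ‖q‖ ^ 2 + χ * ‖Δ q‖ ^ 2 ≤ ‖x‖ ^ 2 + χ * ‖Δ x‖ ^ 2 := by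
  have h := horth _ hx
  have h₁ := norm_add_sq_real q (x - q)
  have h₂ := norm_add_sq_real (Δ q) (Δ (x - q))
  rw [add_sub_cancel] at h₁
  rw [← map_add, add_sub_cancel] at h₂
  rw [innerS] at h
  nlinarith [sq_nonneg ‖x - q‖, mul_nonneg hχ (sq_nonneg ‖Δ (x - q)‖)]

section Green

variable {P : ℕ → H} {Δ G : H →ₗ[ℝ] H}

lemma apply_mem_Wlt_succ (hGmap : ∀ n, ∀ u ∈ Wlt P (n + 1), G u ∈ Wlt P (n + 2)) {n : ℕ}
    {u : H} (hu : u ∈ Wlt P n) : G u ∈ Wlt P (n + 1) := by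
  cases n with
  | zero =>
    rw [Wlt_zero, Submodule.mem_bot] at hu
    simp [hu]
  | succ k => exact hGmap k u hu

lemma norm_le_mul_norm_apply_of_inner_eq_zero (hP : LinearIndependent ℝ P)
    (hΔ0 : Δ (P 0) = 0) (hΔsucc : ∀ n, Δ (P (n + 1)) = P n)
    (hGsym : ∀ u ∈ Wtot P, ∀ v ∈ Wtot P, ⟪G u, v⟫ = ⟪u, G v⟫)
    (hGinv : ∀ u ∈ Wtot P, Δ (G u) = u)
    (hGmap : ∀ n, ∀ u ∈ Wlt P (n + 1), G u ∈ Wlt P (n + 2))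
    {C : ℝ} (hGbound : ∀ u ∈ Wtot P, ‖G u‖ ≤ C * ‖u‖)
    {N : ℕ} {s : H} (hs : s ∈ Wlt P N) (hs0 : ⟪s, P 0⟫ = 0) :
    ‖s‖ ≤ C * ‖Δ s‖ := by
  have hΔs : Δ s ∈ Wlt P N := apply_mem_Wlt hΔ0 hΔsucc (Wlt_mono N.le_succ hs)
  have hker : s - G (Δ s) ∈ ℝ ∙ P 0 := by
    rw [← Wlt_one]
    refine mem_Wlt_succ_of_apply_mem hP hΔ0 hΔsucc
      (sub_mem (Wlt_mono N.le_succ hs) (apply_mem_Wlt_succ hGmap hΔs)) ?_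
    rw [map_sub, hGinv _ (Wlt_le_Wtot N hΔs), sub_self]
    exact zero_mem _
  have hsq : ‖s‖ ^ 2 = ⟪G s, Δ s⟫ := by
    obtain ⟨a, ha⟩ := Submodule.mem_span_singleton.mp hker
    rw [hGsym _ (Wlt_le_Wtot N hs) _ (Wlt_le_Wtot N hΔs), ← real_inner_self_eq_norm_sq,
      ← sub_eq_zero, ← inner_sub_right, ← ha, real_inner_smul_right, hs0, mul_zero]
  rcases (norm_nonneg s).eq_or_lt with hs' | hs'
  · simp [norm_eq_zero.mp hs'.symm]
  refine le_of_mul_le_mul_right ?_ hs'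
  calc ‖s‖ * ‖s‖ = ⟪G s, Δ s⟫ := by rw [← hsq, sq]
    _ ≤ ‖G s‖ * ‖Δ s‖ := real_inner_le_norm _ _
    _ ≤ C * ‖s‖ * ‖Δ s‖ := by gcongr; exact hGbound _ (Wlt_le_Wtot N hs)
    _ = C * ‖Δ s‖ * ‖s‖ := by ring

lemma sobolev_sq_le_of_sub_P_mem (hP : LinearIndependent ℝ P)
    (hΔ0 : Δ (P 0) = 0) (hΔsucc : ∀ n, Δ (P (n + 1)) = P n)
    (hGinv : ∀ u ∈ Wtot P, Δ (G u) = u)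
    (hGmap : ∀ n, ∀ u ∈ Wlt P (n + 1), G u ∈ Wlt P (n + 2))
    {C : ℝ} (hGbound : ∀ u ∈ Wtot P, ‖G u‖ ≤ C * ‖u‖) {χ : ℝ} (hχ : 0 ≤ χ)
    {m : ℕ} {q x : H} (hq : q - P m ∈ Wlt P m) (hx : x - P (m + 1) ∈ Wlt P (m + 1))
    (horth : ∀ w ∈ Wlt P (m + 1), innerS Δ χ x w = 0) :
    ‖x‖ ^ 2 + χ * ‖Δ x‖ ^ 2 ≤ (C ^ 2 + χ) * ‖q‖ ^ 2 := by
  have hqW : q ∈ Wtot P := Wlt_le_Wtot _ (mem_Wlt_succ_of_sub_mem hq)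
  have hGq : G q - x ∈ Wlt P (m + 1) := by
    refine mem_Wlt_succ_of_apply_mem hP hΔ0 hΔsucc
      (sub_mem (hGmap m _ (mem_Wlt_succ_of_sub_mem hq)) (mem_Wlt_succ_of_sub_mem hx)) ?_
    simpa [hGinv _ hqW] using neg_mem (sub_mem (apply_sub_P_mem_Wlt hΔ0 hΔsucc hx) hq)
  calc ‖x‖ ^ 2 + χ * ‖Δ x‖ ^ 2 ≤ ‖G q‖ ^ 2 + χ * ‖Δ (G q)‖ ^ 2 :=
        sobolev_sq_le_of_sub_mem_of_innerS_eq_zero hχ horth hGq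
    _ ≤ (C * ‖q‖) ^ 2 + χ * ‖q‖ ^ 2 := by
        rw [hGinv _ hqW]
        gcongr
        exact hGbound _ hqW
    _ = (C ^ 2 + χ) * ‖q‖ ^ 2 := by ring

end Green

/-- For `n ≥ 1`: `‖p_n‖₂ ≤ ‖s_n‖₂ ≤ C‖p_{n−1}‖₂` and `(1 + χC⁻²)‖p_n‖₂² ≤ ‖s_n‖_S² ≤ (C² + χ)‖p_{n−1}‖₂²`. -/
theorem statement7
    (P : ℕ → H) (hP : LinearIndependent ℝ P)
    (Δ G : H →ₗ[ℝ] H)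
    (hΔ0 : Δ (P 0) = 0) (hΔsucc : ∀ n, Δ (P (n + 1)) = P n)
    (hGsym : ∀ u ∈ Wtot P, ∀ v ∈ Wtot P, ⟪ G u, v ⟫ = ⟪ u, G v ⟫)
    (hGinv : ∀ u ∈ Wtot P, Δ (G u) = u)
    (hGmap : ∀ n, ∀ u ∈ Wlt P (n + 1), G u ∈ Wlt P (n + 2))
    (C : ℝ) (hC : 0 < C)
    (hGbound : ∀ u ∈ Wtot P, ‖G u‖ ≤ C * ‖u‖)
    (χ : ℝ) (hχ : 0 < χ)
    (p : ℕ → H)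
    (hpmonic : ∀ n, p n - P n ∈ Wlt P n)
    (hportho : ∀ n, ∀ w ∈ Wlt P n, ⟪ p n, w ⟫ = 0)
    (s : ℕ → H)
    (hsmonic : ∀ n, s n - P n ∈ Wlt P n)
    (hsortho : ∀ n, ∀ w ∈ Wlt P n, innerS Δ χ (s n) w = 0)
    : ∀ n, 1 ≤ n →
      ‖p n‖ ≤ ‖s n‖ ∧ ‖s n‖ ≤ C * ‖p (n - 1)‖ ∧
      (1 + χ * C⁻¹ ^ 2) * ‖p n‖ ^ 2 ≤ ‖s n‖ ^ 2 + χ * ‖Δ (s n)‖ ^ 2 ∧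
      ‖s n‖ ^ 2 + χ * ‖Δ (s n)‖ ^ 2 ≤ (C ^ 2 + χ) * ‖p (n - 1)‖ ^ 2 := by
  intro n hn
  obtain ⟨m, rfl⟩ : ∃ m, n = m + 1 := ⟨n - 1, by omega⟩
  rw [Nat.add_sub_cancel]
  have hs : s (m + 1) ∈ Wlt P (m + 2) := mem_Wlt_succ_of_sub_mem (hsmonic (m + 1))
  have hps : ‖p (m + 1)‖ ≤ ‖s (m + 1)‖ := norm_le_of_sub_mem_of_inner_eq_zero (hportho _)
    (by simpa using sub_mem (hsmonic (m + 1)) (hpmonic (m + 1)))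
  have hpΔs : ‖p m‖ ≤ ‖Δ (s (m + 1))‖ := norm_le_of_sub_mem_of_inner_eq_zero (hportho m)
    (by simpa using sub_mem (apply_sub_P_mem_Wlt hΔ0 hΔsucc (hsmonic (m + 1))) (hpmonic m))
  have hsΔs : ‖s (m + 1)‖ ≤ C * ‖Δ (s (m + 1))‖ :=
    norm_le_mul_norm_apply_of_inner_eq_zero hP hΔ0 hΔsucc hGsym hGinv hGmap hGbound hs
      (by simpa [innerS, hΔ0] using hsortho _ _ (P_mem_Wlt (Nat.succ_pos m)))
  have hupper : ‖s (m + 1)‖ ^ 2 + χ * ‖Δ (s (m + 1))‖ ^ 2 ≤ (C ^ 2 + χ) * ‖p m‖ ^ 2 :=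
    sobolev_sq_le_of_sub_P_mem hP hΔ0 hΔsucc hGinv hGmap hGbound hχ.le (hpmonic m)
      (hsmonic (m + 1)) (hsortho _)
  refine ⟨hps, ?_, ?_, hupper⟩
  · have hχp := mul_le_mul_of_nonneg_left (pow_le_pow_left₀ (norm_nonneg _) hpΔs 2) hχ.le
    exact (pow_le_pow_iff_left₀ (norm_nonneg _) (by positivity) two_ne_zero).mp
      (by nlinarith)
  · have hpC : C⁻¹ * ‖p (m + 1)‖ ≤ ‖Δ (s (m + 1))‖ := by
      rw [inv_mul_le_iff₀ hC]
      exact hps.trans hsΔs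
    calc (1 + χ * C⁻¹ ^ 2) * ‖p (m + 1)‖ ^ 2
        = ‖p (m + 1)‖ ^ 2 + χ * (C⁻¹ * ‖p (m + 1)‖) ^ 2 := by ring
      _ ≤ ‖s (m + 1)‖ ^ 2 + χ * ‖Δ (s (m + 1))‖ ^ 2 := by gcongr
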